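/- For any program P, if P:[] ⇓ λx.e:ρ in the environment-based semantics, then λx.e is a subexpression of P. -/

import Mathlib

/- Untyped λ-expressions. -/
inductive Exp : Type
  | var : String → Exp
  | app : Exp → Exp → Exp
  | lam : String → Exp → Exp
deriving DecidableEq

namespace Exp

/-- Free variables. -/
def fv : Exp → Finset String
  | var x => {x}
  | app e1 e2 => fv e1 ∪ fv e2
  | lam x e => fv e \ {x}

/-- The set of subexpressions of a λ-expression. -/
def subexp : Exp → Set Exp
  | var x => {var x}
  | app e1 e2 => insert (app e1 e2) (subexp e1 ∪ subexp e2)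
  | lam x e => insert (lam x e) (subexp e)

end Exp

/- Values (closures), environments and states of the environment-based
semantics.  An environment is a (partial) map from variable names to values;
a state `e:ρ` pairs an expression with an environment. -/
inductive Val : Type
  | clos : String → Exp → (String → Option Val) → Val

abbrev Env := String → Option Val
abbrev State := Exp × Env

/-- A value `λx.e:ρ` viewed as a state. -/
def Val.toState : Val → State
  | .clos x e ρ => (Exp.lam x e, ρ)

/-- The λ-expression component of a value. -/
def Val.toExp : Val → Exp
  | .clos x e _ => Exp.lam x e

def Env.update (ρ : Env) (x : String) (v : Val) : Env :=
  fun y => if y = x then some v else ρ y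

def Env.empty : Env := fun _ => none
/- Environment-based evaluation `s ⇓ v` and the call relations
`→r` (Operator), `→d` (Operand), `→c` (Call); (Apply) evaluates an
application via its `→c` call. -/
mutual
  inductive EvalE : State → Val → Prop
    | value (x : String) (e : Exp) (ρ : Env) :
        EvalE (Exp.lam x e, ρ) (Val.clos x e ρ)
    | var {ρ : Env} {x : String} {v : Val} :
        ρ x = some v → EvalE (Exp.var x, ρ) v
    | apply {s s' : State} {v : Val} :
        CallC s s' → EvalE s' v → EvalE s v
  inductive CallC : State → State → Prop
    | call {e1 e2 : Exp} {ρ ρ0 : Env} {x : String} {e0 : Exp} {v2 : Val} :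
        EvalE (e1, ρ) (Val.clos x e0 ρ0) → EvalE (e2, ρ) v2 →
        CallC (Exp.app e1 e2, ρ) (e0, Env.update ρ0 x v2)
end

inductive CallR : State → State → Prop
  | oper (e1 e2 : Exp) (ρ : Env) : CallR (Exp.app e1 e2, ρ) (e1, ρ)

inductive CallD : State → State → Prop
  | opnd {e1 : Exp} {ρ : Env} {v1 : Val} (e2 : Exp) :
      EvalE (e1, ρ) v1 → CallD (Exp.app e1 e2, ρ) (e2, ρ)

/-- The call relation `→` on states is `→r ∪ →d ∪ →c`. -/
def Call (s s' : State) : Prop := CallR s s' ∨ CallD s s' ∨ CallC s s'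

/-!
Every closure that arises while evaluating `P` is built from a λ-abstraction occurring in `P`,
and so are, recursively, all closures stored in its environment. This invariant holds for the
initial state `P:[]` and is preserved by every rule: (Value) closes over a λ of the current
expression, (Var) returns a stored closure, and (Call) continues with the body of a closure
whose λ occurs in `P`, in an environment extended by a closure that again satisfies it.
-/

namespace Exp

lemma mem_subexp_self (e : Exp) : e ∈ e.subexp := by
  cases e <;> simp [subexp]

lemma subexp_subset_of_mem {a b : Exp} (h : a ∈ b.subexp) : a.subexp ⊆ b.subexp := by
  induction b with
  | var y =>
    rw [show a = var y from h]
  | app b₁ b₂ ih₁ ih₂ =>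
    rcases h with rfl | h | h
    · rfl
    · exact (ih₁ h).trans fun _ hc => Or.inr (Or.inl hc)
    · exact (ih₂ h).trans fun _ hc => Or.inr (Or.inr hc)
  | lam y b ih =>
    rcases h with rfl | h
    · rfl
    · exact (ih h).trans fun _ hc => Or.inr hc

lemma mem_subexp_of_app_left {e₁ e₂ P : Exp} (h : app e₁ e₂ ∈ P.subexp) : e₁ ∈ P.subexp :=
  subexp_subset_of_mem h (Or.inr (Or.inl (mem_subexp_self e₁)))

lemma mem_subexp_of_app_right {e₁ e₂ P : Exp} (h : app e₁ e₂ ∈ P.subexp) : e₂ ∈ P.subexp :=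
  subexp_subset_of_mem h (Or.inr (Or.inr (mem_subexp_self e₂)))

lemma mem_subexp_of_lam {x : String} {e P : Exp} (h : lam x e ∈ P.subexp) : e ∈ P.subexp :=
  subexp_subset_of_mem h (Or.inr (mem_subexp_self e))

end Exp

inductive Val.RootedIn (P : Exp) : Val → Prop
  | clos {x : String} {e : Exp} {ρ : Env} : Exp.lam x e ∈ P.subexp →
      (∀ y v, ρ y = some v → Val.RootedIn P v) → Val.RootedIn P (.clos x e ρ)

def Env.RootedIn (P : Exp) (ρ : Env) : Prop :=
  ∀ y v, ρ y = some v → v.RootedIn P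

def State.RootedIn (P : Exp) (s : State) : Prop :=
  s.1 ∈ P.subexp ∧ Env.RootedIn P s.2

lemma Env.rootedIn_empty (P : Exp) : Env.RootedIn P Env.empty :=
  fun _ _ h => nomatch h

lemma Env.RootedIn.update {P : Exp} {ρ : Env} (hρ : Env.RootedIn P ρ) (x : String) {v : Val}
    (hv : v.RootedIn P) : Env.RootedIn P (ρ.update x v) := by
  intro y w hy
  unfold Env.update at hy
  split at hy
  · exact Option.some_inj.mp hy ▸ hv
  · exact hρ y w hy

mutual

theorem EvalE.rootedIn {P : Exp} {s : State} {v : Val} :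
    EvalE s v → State.RootedIn P s → v.RootedIn P
  | .value _ _ _, ⟨he, hρ⟩ => .clos he hρ
  | .var hx, ⟨_, hρ⟩ => hρ _ _ hx
  | .apply hcall heval, hs => heval.rootedIn (hcall.rootedIn hs)

theorem CallC.rootedIn {P : Exp} {s s' : State} :
    CallC s s' → State.RootedIn P s → State.RootedIn P s'
  | .call (x := x) h₁ h₂, ⟨happ, hρ⟩ =>
    match h₁.rootedIn ⟨Exp.mem_subexp_of_app_left happ, hρ⟩ with
    | .clos hlam hρ₀ =>
      ⟨Exp.mem_subexp_of_lam hlam,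
        Env.RootedIn.update hρ₀ x (h₂.rootedIn ⟨Exp.mem_subexp_of_app_right happ, hρ⟩)⟩

end

/-- If `P:[] ⇓ λx.e:ρ` then `λx.e` is a subexpression of `P`. -/
theorem eval_value_is_subexpression (P : Exp) (hP : P.fv = ∅)
    (x : String) (e : Exp) (ρ : Env)
    (h : EvalE (P, Env.empty) (Val.clos x e ρ)) :
    Exp.lam x e ∈ Exp.subexp P := by
  obtain ⟨hlam, -⟩ := h.rootedIn ⟨Exp.mem_subexp_self P, Env.rootedIn_empty P⟩
  exact hlam
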